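/- arXiv:1401.4633 — 3 statements merged into one kernel-verified Lean document; each statement's English description precedes it below -/
import Mathlib

section
/- Let F be a field and f(x, r) = r^{ℓ+2} + Σ_{i=1}^{ℓ} x_i r^i with ℓ+2 not divisible by char(F). For any (Δx, Δr, Δt) ≠ (0,0,0) and any x, the polynomial g(r) = f(x+Δx, r+Δr) − f(x, r) − Δt in F[r] is a nonzero polynomial of degree at most ℓ+1. -/
open Polynomial Finset

/-!
Write `g = ((X + Δr)^(ℓ+2) - X^(ℓ+2)) + (S(x + Δx, X + Δr) - S(x, X)) - Δt`
with `S(y, p) = ∑ yᵢ p^(i+1)`. The second bracket has degree `≤ ℓ`, the first has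
degree `≤ ℓ + 1` and coefficient `(ℓ+2)Δr` at `X^(ℓ+1)`: this gives the degree bound
and, when `Δr ≠ 0`, nonvanishing. When `Δr = 0`, `g = ∑ Δxᵢ X^(i+1) - Δt` has
coefficients `-Δt, Δx₁, …, Δx_ℓ`.
-/

namespace Polynomial

variable {R : Type*} [CommRing R]

theorem natDegree_sum_C_mul_pow_succ_le {ℓ : ℕ} (y : Fin ℓ → R) {p : R[X]}
    (hp : p.natDegree ≤ 1) :
    (∑ i : Fin ℓ, C (y i) * p ^ ((i : ℕ) + 1)).natDegree ≤ ℓ := by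
  refine natDegree_sum_le_of_forall_le _ _ fun i _ => ?_
  calc (C (y i) * p ^ ((i : ℕ) + 1)).natDegree
      ≤ ((i : ℕ) + 1) * p.natDegree := (natDegree_C_mul_le _ _).trans natDegree_pow_le
    _ ≤ ((i : ℕ) + 1) * 1 := Nat.mul_le_mul_left _ hp
    _ ≤ ℓ := by omega

theorem natDegree_X_add_C_le (a : R) : (X + C a).natDegree ≤ 1 :=
  natDegree_add_C.trans_le natDegree_X_le

theorem natDegree_X_add_C_pow_succ_sub_X_pow_succ_le (a : R) (n : ℕ) :
    ((X + C a) ^ (n + 1) - X ^ (n + 1)).natDegree ≤ n := by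
  rw [natDegree_le_iff_coeff_eq_zero]
  intro k hk
  rw [coeff_sub, coeff_X_add_C_pow, coeff_X_pow]
  rcases (Nat.succ_le_of_lt hk).eq_or_lt with rfl | hlt
  · simp
  · simp [Nat.choose_eq_zero_of_lt hlt, hlt.ne']

theorem coeff_X_add_C_pow_succ_sub_X_pow_succ (a : R) (n : ℕ) :
    ((X + C a) ^ (n + 1) - X ^ (n + 1)).coeff n = (n + 1) * a := by
  simp [coeff_X_add_C_pow, coeff_X_pow, mul_comm]

theorem sum_C_mul_X_pow_succ_sub_C_ne_zero {ℓ : ℕ} {y : Fin ℓ → R} {c : R}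
    (h : ¬ (y = 0 ∧ c = 0)) : (∑ i : Fin ℓ, C (y i) * X ^ ((i : ℕ) + 1)) - C c ≠ 0 := by
  intro h0
  have hc : c = 0 := by simpa using congrArg (coeff · 0) h0
  have hy : y = 0 := by
    ext i
    simpa [Fin.val_inj] using congrArg (coeff · ((i : ℕ) + 1)) h0
  exact h ⟨hy, hc⟩

end Polynomial

theorem stmt_1_general (F : Type*) [Field F] (ℓ : ℕ)
    (hchar : ¬ (ringChar F ∣ (ℓ + 2)))
    (x Δx : Fin ℓ → F) (Δr Δt : F)
    (hnz : ¬ (Δx = 0 ∧ Δr = 0 ∧ Δt = 0))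
    (g : F[X])
    (hg : g = ((X + C Δr) ^ (ℓ + 2)
          + ∑ i : Fin ℓ, C (x i + Δx i) * (X + C Δr) ^ ((i : ℕ) + 1))
        - (X ^ (ℓ + 2) + ∑ i : Fin ℓ, C (x i) * X ^ ((i : ℕ) + 1))
        - C Δt) :
    g ≠ 0 ∧ g.natDegree ≤ ℓ + 1 := by
  have hℓ2 : (ℓ + 2 : F) ≠ 0 := by exact_mod_cast (ringChar.spec F (ℓ + 2)).not.mpr hchar
  set S := ∑ i : Fin ℓ, C (x i + Δx i) * (X + C Δr) ^ ((i : ℕ) + 1)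
    - ∑ i : Fin ℓ, C (x i) * X ^ ((i : ℕ) + 1)
  have hS : S.natDegree ≤ ℓ := max_self ℓ ▸ natDegree_sub_le_of_le
    (natDegree_sum_C_mul_pow_succ_le _ (natDegree_X_add_C_le Δr))
    (natDegree_sum_C_mul_pow_succ_le _ natDegree_X_le)
  have hg' : g = ((X + C Δr) ^ (ℓ + 1 + 1) - X ^ (ℓ + 1 + 1)) + S - C Δt := by
    rw [hg]; ring
  refine ⟨?_, ?_⟩
  · by_cases hr : Δr = 0
    · have hg0 : g = ∑ i : Fin ℓ, C (Δx i) * X ^ ((i : ℕ) + 1) - C Δt := by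
        simp only [hg, hr, map_zero, add_zero, map_add, add_mul, sum_add_distrib]
        ring
      exact hg0 ▸ sum_C_mul_X_pow_succ_sub_C_ne_zero (by tauto)
    · have hcoeff : g.coeff (ℓ + 1) = (ℓ + 2) * Δr := by
        rw [hg', coeff_sub, coeff_add, coeff_X_add_C_pow_succ_sub_X_pow_succ,
          coeff_eq_zero_of_natDegree_lt (hS.trans_lt ℓ.lt_succ_self),
          coeff_C_of_ne_zero ℓ.succ_ne_zero]
        push_cast; ring
      exact fun h0 => mul_ne_zero hℓ2 hr (by rw [← hcoeff, h0, coeff_zero])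
  · rw [hg']
    exact natDegree_sub_le_of_le (natDegree_add_le_of_degree_le
      (natDegree_X_add_C_pow_succ_sub_X_pow_succ_le Δr (ℓ + 1)) (hS.trans ℓ.le_succ))
      (natDegree_C Δt).le

/-- Algebraic core of AMD security: the difference polynomial
`g(r) = f(x+Δx, r+Δr) − f(x,r) − Δt` (with `f(x,r) = r^(ℓ+2) + ∑ x_i r^i`)
is nonzero of degree at most `ℓ+1`, provided `char F ∤ ℓ+2` and the offset is nonzero. -/
theorem stmt_1 (F : Type*) [Field F] (ℓ : ℕ) (hℓ : 1 ≤ ℓ)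
    (hchar : ¬ (ringChar F ∣ (ℓ + 2)))
    (x Δx : Fin ℓ → F) (Δr Δt : F)
    (hnz : ¬ (Δx = 0 ∧ Δr = 0 ∧ Δt = 0))
    (g : F[X])
    (hg : g = ((X + C Δr) ^ (ℓ + 2)
          + ∑ i : Fin ℓ, C (x i + Δx i) * (X + C Δr) ^ ((i : ℕ) + 1))
        - (X ^ (ℓ + 2) + ∑ i : Fin ℓ, C (x i) * X ^ ((i : ℕ) + 1))
        - C Δt) :
    g ≠ 0 ∧ g.natDegree ≤ ℓ + 1 :=
  stmt_1_general F ℓ hchar x Δx Δr Δt hnz g hg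
end

section
/- Let F be a field, and let f_1, ..., f_v ∈ F[x_1, ..., x_w] be defined by f_i(x) = Σ_{j=1}^{w} A_{i,j} x_j^{d_j}, where d_1 > d_2 > ... > d_w ≥ 1 are integers and A is a v × w matrix over F all of whose r × r minors are nonzero for 1 ≤ r ≤ min(v,w). Suppose J ⊆ {1,...,w} has |J| = v and for each j ∈ J the map x ↦ x^{d_j} is a bijection on F (e.g. F finite of order q with gcd(d_j, q−1) = 1). Then for every assignment of values (x_j)_{j ∉ J} ∈ F^{w−v}, there is exactly one assignment of (x_j)_{j ∈ J} making f_1(x) = ... = f_v(x) = 0. In particular the common zero set V_F(f_1, ..., f_v) ⊆ F^w has exactly |F|^{w−v} elements. -/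
/-!
Fix the coordinates outside `J`. The system then reads `M y = -c`, where `M` is the square minor
of `A` on the columns `J`, `y_j = x_j ^ d_j` for `j ∈ J`, and `c` collects the fixed terms.
As `M` is invertible and each power map on `J` is bijective, `(x_j)_{j ∈ J} ↦ M y` is a
bijection, so the system has exactly one solution. Hence restricting the common zeros to the
coordinates outside `J` is a bijection onto `F ^ (w - v)`.
-/

open Function Matrix

theorem existsUnique_of_existsUnique_extend_val {ι α : Type*} {P : (ι → α) → Prop}
    (p : ι → Prop) (g : ι → α) (h : ∃! z : {j // p j} → α, P (extend Subtype.val z g)) :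
    ∃! x : ι → α, (∀ j, ¬p j → x j = g j) ∧ P x := by
  obtain ⟨z, hz, hz_unique⟩ := h
  have extend_restrict : ∀ x : ι → α, (∀ j, ¬p j → x j = g j) →
      extend Subtype.val (fun j : {j // p j} => x j) g = x := by
    intro x hx
    funext j
    by_cases hj : p j
    · exact Subtype.val_injective.extend_apply _ _ ⟨j, hj⟩
    · rw [extend_apply' _ _ _ (by simpa using hj), hx j hj]
  refine ⟨extend Subtype.val z g,
    ⟨fun j hj => extend_apply' _ _ _ (by simpa using hj), hz⟩, ?_⟩
  rintro x ⟨hxg, hx⟩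
  rw [← extend_restrict x hxg, hz_unique (fun j : {j // p j} => x j)
    (by simpa only [extend_restrict x hxg] using hx)]

theorem Matrix.mulVec_bijective_of_isUnit_det_submatrix {m n R : Type*} [CommRing R]
    [Fintype m] [DecidableEq m] [Fintype n] (M : Matrix m n R) (e : m ≃ n)
    (hM : IsUnit (M.submatrix id e).det) : Bijective M.mulVec := by
  have hN := (isUnit_iff_isUnit_det _).2 hM
  have hN_bij : Bijective (M.submatrix id e).mulVec :=
    ⟨mulVec_injective_of_isUnit hN, mulVec_surjective_iff_isUnit.2 hN⟩
  have : M.mulVec = (M.submatrix id e).mulVec ∘ e.symm.arrowCongr (Equiv.refl R) := by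
    funext v
    simp [submatrix_mulVec_equiv, comp_def]
  rw [this]
  exact hN_bij.comp (Equiv.bijective _)

theorem existsUnique_sum_mul_pow_eq_zero {m n R : Type*} [CommRing R] [Fintype m]
    [DecidableEq m] [Fintype n] [DecidableEq n] (A : Matrix m n R) (d : n → ℕ) (J : Finset n)
    (e : m ≃ J) (hA : IsUnit (A.submatrix id (fun i => (e i : n))).det)
    (hpow : ∀ j ∈ J, Bijective fun x : R => x ^ d j) (g : n → R) :
    ∃! x : n → R, (∀ j ∉ J, x j = g j) ∧ ∀ i, ∑ j, A i j * x j ^ d j = 0 := by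
  set M : Matrix m J R := A.submatrix id Subtype.val
  set c : m → R := fun i => ∑ j : {j // j ∉ J}, A i j * g j ^ d j
  have hsplit : ∀ (z : J → R) i, ∑ j, A i j * extend Subtype.val z g j ^ d j
      = (M *ᵥ fun j => z j ^ d j) i + c i := by
    intro z i
    rw [← Fintype.sum_subtype_add_sum_subtype (· ∈ J)]
    congr 1
    · simp only [M, mulVec, dotProduct, submatrix_apply, id, Subtype.val_injective.extend_apply]
      convert rfl
    · refine Finset.sum_congr rfl fun j _ => ?_
      rw [extend_apply' _ _ _ (by simpa using j.2)]
  have hbij : Bijective fun z : J → R => M *ᵥ fun j => z j ^ d j :=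
    (M.mulVec_bijective_of_isUnit_det_submatrix e hA).comp
      (Bijective.piMap fun j => hpow j j.2)
  refine existsUnique_of_existsUnique_extend_val (· ∈ J) g ?_
  simp only [hsplit]
  simpa [funext_iff, eq_neg_iff_add_eq_zero] using hbij.existsUnique (-c)

theorem ncard_setOf_eq_card_pow_of_existsUnique {ι α : Type*} [Fintype ι] [DecidableEq ι]
    [Fintype α] [Nonempty α] {P : (ι → α) → Prop} (J : Finset ι)
    (h : ∀ g : ι → α, ∃! x : ι → α, (∀ j ∉ J, x j = g j) ∧ P x) :
    {x | P x}.ncard = Fintype.card α ^ (Fintype.card ι - J.card) := by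
  have restrict_bijective : Bijective fun (x : {x | P x}) (j : {j // j ∉ J}) => x.1 j := by
    constructor
    · rintro ⟨x, hx⟩ ⟨y, hy⟩ hxy
      exact Subtype.ext ((h x).unique ⟨fun _ _ => rfl, hx⟩
        ⟨fun j hj => (congrFun hxy ⟨j, hj⟩).symm, hy⟩)
    · intro z
      obtain ⟨x, ⟨hxz, hx⟩, -⟩ := h (extend Subtype.val z fun _ => Classical.arbitrary α)
      exact ⟨⟨x, hx⟩,
        funext fun j => (hxz j j.2).trans (Subtype.val_injective.extend_apply _ _ j)⟩
  rw [← Nat.card_coe_set_eq, Nat.card_congr (Equiv.ofBijective _ restrict_bijective),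
    Nat.card_fun, Nat.card_eq_fintype_card, Nat.card_eq_fintype_card, Fintype.card_subtype_compl,
    Fintype.card_coe]

theorem stmt_6_general (F : Type*) [Field F] [Fintype F] (v w : ℕ)
    (d : Fin w → ℕ)
    (A : Matrix (Fin v) (Fin w) F)
    (hreg : ∀ (r : ℕ), 1 ≤ r → r ≤ v →
      ∀ (ι : Fin r ↪ Fin v) (κ : Fin r ↪ Fin w),
        (A.submatrix ι κ).det ≠ 0)
    (J : Finset (Fin w)) (hJ : J.card = v)
    (hbij : ∀ j ∈ J, Function.Bijective (fun x : F => x ^ d j)) :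
    (∀ g : Fin w → F, ∃! x : Fin w → F,
      (∀ j ∉ J, x j = g j) ∧ ∀ i : Fin v, ∑ j : Fin w, A i j * x j ^ d j = 0) ∧
    {x : Fin w → F | ∀ i : Fin v, ∑ j : Fin w, A i j * x j ^ d j = 0}.ncard
      = Fintype.card F ^ (w - v) := by
  let e : Fin v ≃ J := (J.equivFinOfCardEq hJ).symm
  have hdet : IsUnit (A.submatrix id fun i => (e i : Fin w)).det := by
    rcases Nat.eq_zero_or_pos v with rfl | hv
    · simp
    · exact (hreg v hv le_rfl (Function.Embedding.refl _)
        ⟨_, Subtype.val_injective.comp e.injective⟩).isUnit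
  have key := existsUnique_sum_mul_pow_eq_zero A d J e hdet hbij
  exact ⟨key, by simpa [hJ] using ncard_setOf_eq_card_pow_of_existsUnique J key⟩

/-- Dvir–Lovett bijection: for `f_i(x) = ∑_j A_{i,j} x_j^{d_j}` with `A` strongly regular
and the power maps `x ↦ x^{d_j}` bijective for `j ∈ J` (`|J| = v`), every assignment of the
coordinates outside `J` extends uniquely to a common zero of `f_1, …, f_v`; hence the common
zero set in `F^w` has exactly `|F|^{w−v}` elements. -/
theorem stmt_6 (F : Type*) [Field F] [Fintype F] (v w : ℕ) (hvw : v ≤ w)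
    (d : Fin w → ℕ) (hd1 : ∀ j, 1 ≤ d j) (hdanti : StrictAnti d)
    (A : Matrix (Fin v) (Fin w) F)
    (hreg : ∀ (r : ℕ), 1 ≤ r → r ≤ v →
      ∀ (ι : Fin r ↪ Fin v) (κ : Fin r ↪ Fin w),
        (A.submatrix ι κ).det ≠ 0)
    (J : Finset (Fin w)) (hJ : J.card = v)
    (hbij : ∀ j ∈ J, Function.Bijective (fun x : F => x ^ d j)) :
    (∀ g : Fin w → F, ∃! x : Fin w → F,
      (∀ j ∉ J, x j = g j) ∧ ∀ i : Fin v, ∑ j : Fin w, A i j * x j ^ d j = 0) ∧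
    {x : Fin w → F | ∀ i : Fin v, ∑ j : Fin w, A i j * x j ^ d j = 0}.ncard
      = Fintype.card F ^ (w - v) :=
  stmt_6_general F v w d A hreg J hJ hbij
end

section
/- Let F_q be a finite field, γ a primitive element, k ≥ v ≥ 1, and let B_0(X) ∈ F_q[X] be a nonzero polynomial of degree at most v−1. Consider the k × k lower-triangular matrix T with diagonal entries T_{i,i} = B_0(γ^{i−1}) for i = 1, ..., k (and arbitrary entries below the diagonal). Then T has rank at least k − (v−1), and hence the solution set of T f = c (for any c ∈ F_q^k) is either empty or an affine subspace of F_q^k of dimension at most v−1. -/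
/-!
The diagonal entry at index `i` vanishes only when `γ^i` is a root of `B₀`, and the powers
`γ^i`, `i < k ≤ q - 1`, are distinct, so at most `deg B₀ ≤ v - 1` diagonal entries vanish.
The principal submatrix on the remaining indices is lower triangular with nonzero diagonal,
hence invertible, which bounds the rank from below; rank–nullity then bounds the kernel, and
the solutions of `T f = c` form a coset of the kernel as soon as there is one.
-/

open Polynomial Finset

theorem Polynomial.card_filter_eval_eq_zero_le {R ι : Type*} [CommRing R] [IsDomain R]
    [DecidableEq R] {p : R[X]} (hp : p ≠ 0) (s : Finset ι) {x : ι → R} (hx : Set.InjOn x s) :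
    #{i ∈ s | p.eval (x i) = 0} ≤ p.natDegree := by
  calc #{i ∈ s | p.eval (x i) = 0} ≤ #p.roots.toFinset :=
        card_le_card_of_injOn x (fun i hi => by simp_all [mem_roots hp])
          (hx.mono (coe_subset.mpr (filter_subset _ s)))
    _ ≤ p.natDegree := (Multiset.toFinset_card_le _).trans p.card_roots'

theorem Matrix.IsLowerTriangular.card_diag_ne_zero_le_rank {m K : Type*} [Fintype m]
    [LinearOrder m] [Field K] [DecidableEq K] {A : Matrix m m K} (hA : A.IsLowerTriangular) :
    #{i | A i i ≠ 0} ≤ A.rank := by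
  set S : Finset m := {i | A i i ≠ 0}
  have hdet : (A.submatrix (Subtype.val : S → m) Subtype.val).det ≠ 0 := by
    rw [Matrix.det_of_isLowerTriangular _ (hA.submatrix (f := (Subtype.val : S → m)))]
    exact prod_ne_zero_iff.mpr fun i _ => (mem_filter.mp i.2).2
  calc #S = (A.submatrix (Subtype.val : S → m) Subtype.val).rank := by
        rw [Matrix.rank_of_isUnit _ ((Matrix.isUnit_iff_isUnit_det _).mpr hdet.isUnit),
          Fintype.card_coe]
    _ ≤ A.rank := Matrix.rank_submatrix_le _ _ _

theorem Matrix.finrank_ker_mulVecLin {m n K : Type*} [Fintype n] [Field K]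
    (A : Matrix m n K) :
    Module.finrank K (LinearMap.ker A.mulVecLin) = Fintype.card n - A.rank := by
  have hrank_nullity := LinearMap.finrank_range_add_finrank_ker A.mulVecLin
  rw [Module.finrank_fintype_fun_eq_card] at hrank_nullity
  rw [Matrix.rank]
  omega

theorem LinearMap.setOf_apply_eq_eq_image_ker {R M N : Type*} [Ring R] [AddCommGroup M]
    [AddCommGroup N] [Module R M] [Module R N] (f : M →ₗ[R] N) {x₀ : M} :
    {x | f x = f x₀} = (x₀ + ·) '' (LinearMap.ker f : Set M) := by
  ext x
  refine ⟨fun hx => ⟨x - x₀, by simpa [sub_eq_zero] using hx, add_sub_cancel x₀ x⟩, ?_⟩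
  rintro ⟨u, hu, rfl⟩
  simp [LinearMap.mem_ker.mp hu]

theorem Units.pow_injOn_Iio_card_sub_one {G : Type*} [GroupWithZero G] {γ : Gˣ}
    (hγ : ∀ u : Gˣ, u ∈ Subgroup.zpowers γ) :
    Set.InjOn (fun i : ℕ => (γ : G) ^ i) (Set.Iio (Nat.card G - 1)) := by
  have horder : orderOf (γ : G) = Nat.card G - 1 := by
    rw [orderOf_units, orderOf_eq_card_of_forall_mem_zpowers hγ, Nat.card_units]
  exact horder ▸ pow_injOn_Iio_orderOf

theorem stmt_11_general (F : Type*) [Field F] [Fintype F]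
    (γ : Fˣ) (hγ : ∀ u : Fˣ, u ∈ Subgroup.zpowers γ)
    (k v : ℕ) (hkq : k ≤ Fintype.card F - 1)
    (B0 : F[X]) (hB0 : B0 ≠ 0) (hdeg : B0.natDegree ≤ v - 1)
    (T : Matrix (Fin k) (Fin k) F)
    (hdiag : ∀ i : Fin k, T i i = B0.eval ((γ : F) ^ (i : ℕ)))
    (htri : ∀ i j : Fin k, i < j → T i j = 0) :
    k - (v - 1) ≤ T.rank ∧
    ∀ c : Fin k → F,
      {f : Fin k → F | T.mulVec f = c} = ∅ ∨
      ∃ f0 : Fin k → F, T.mulVec f0 = c ∧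
        {f : Fin k → F | T.mulVec f = c}
          = (fun u => f0 + u) '' (LinearMap.ker T.mulVecLin : Set (Fin k → F)) ∧
        Module.finrank F (LinearMap.ker T.mulVecLin) ≤ v - 1 := by
  classical
  have hpow : Function.Injective fun i : Fin k => (γ : F) ^ (i : ℕ) := by
    have hcard : Nat.card F = Fintype.card F := Nat.card_eq_fintype_card
    have hlt (i : Fin k) : (i : ℕ) < Nat.card F - 1 := by omega
    exact fun i j hij => Fin.ext (Units.pow_injOn_Iio_card_sub_one hγ (hlt i) (hlt j) hij)
  have hzero : #{i : Fin k | T i i = 0} ≤ v - 1 := by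
    simpa only [hdiag] using (B0.card_filter_eval_eq_zero_le hB0 univ hpow.injOn).trans hdeg
  have hrank : k - (v - 1) ≤ T.rank := by
    have hnonzero := Matrix.IsLowerTriangular.card_diag_ne_zero_le_rank (A := T)
      fun i j hij => htri i j hij
    have hsplit := card_filter_add_card_filter_not (s := univ) fun i : Fin k => T i i = 0
    simp only [ne_eq, card_univ, Fintype.card_fin] at hnonzero hsplit
    omega
  have hker : Module.finrank F (LinearMap.ker T.mulVecLin) ≤ v - 1 := by
    rw [T.finrank_ker_mulVecLin, Fintype.card_fin]
    omega
  refine ⟨hrank, fun c => ?_⟩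
  rcases Set.eq_empty_or_nonempty {f | T.mulVec f = c} with hempty | ⟨f0, rfl⟩
  · exact Or.inl hempty
  · exact Or.inr ⟨f0, rfl, T.mulVecLin.setOf_apply_eq_eq_image_ker, hker⟩

/-- Rank bound in linear-algebraic FRS list decoding: a `k × k` lower-triangular matrix
whose `i`-th diagonal entry is `B₀(γ^{i})`, for `B₀ ≠ 0` of degree at most `v−1` and `γ` a
primitive element with `k ≤ q−1`, has rank at least `k − (v−1)`; hence the solution set of
`T f = c` is empty or a coset of the kernel, of dimension at most `v−1`. -/
theorem stmt_11 (F : Type*) [Field F] [Fintype F] [DecidableEq F]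
    (γ : Fˣ) (hγ : ∀ u : Fˣ, u ∈ Subgroup.zpowers γ)
    (k v : ℕ) (hv : 1 ≤ v) (hkv : v ≤ k) (hkq : k ≤ Fintype.card F - 1)
    (B0 : F[X]) (hB0 : B0 ≠ 0) (hdeg : B0.natDegree ≤ v - 1)
    (T : Matrix (Fin k) (Fin k) F)
    (hdiag : ∀ i : Fin k, T i i = B0.eval ((γ : F) ^ (i : ℕ)))
    (htri : ∀ i j : Fin k, i < j → T i j = 0) :
    k - (v - 1) ≤ T.rank ∧
    ∀ c : Fin k → F,
      {f : Fin k → F | T.mulVec f = c} = ∅ ∨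
      ∃ f0 : Fin k → F, T.mulVec f0 = c ∧
        {f : Fin k → F | T.mulVec f = c}
          = (fun u => f0 + u) '' (LinearMap.ker T.mulVecLin : Set (Fin k → F)) ∧
        Module.finrank F (LinearMap.ker T.mulVecLin) ≤ v - 1 :=
  stmt_11_general F γ hγ k v hkq B0 hB0 hdeg T hdiag htri
end
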